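/- There exist δ0 > 0 and n0 ∈ ℕ such that the following holds for all 0 < δ ≤ δ0 and n ≥ n0. Assume the Setup. Then G has at most one edge with both endpoints in D_1' and at most one edge with both endpoints in D_2'. -/

import Mathlib

open SimpleGraph

/-- The number of triangles (copies of `K₃`) in a graph `G`, i.e. `N(K₃, G)`. -/
noncomputable def triangleCount {V : Type*} (G : SimpleGraph V) : ℕ :=
  Set.ncard {s : Finset V | G.IsNClique 3 s}

/-- `G` contains a subgraph isomorphic to `H`. -/
def Contains {W V : Type*} (H : SimpleGraph W) (G : SimpleGraph V) : Prop :=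
  ∃ f : H →g G, Function.Injective f

/-- `G` is `H`-free: it contains no subgraph isomorphic to `H`. -/
def Free {W V : Type*} (H : SimpleGraph W) (G : SimpleGraph V) : Prop :=
  ¬ Contains H G

/-- The expansion `F^△` of a graph `F`: each edge `uv` of `F` is replaced by a triangle
`u v w_{uv}` where the new vertices `w_{uv}` are pairwise distinct and outside `V(F)`. -/
def expansion {V : Type*} (F : SimpleGraph V) : SimpleGraph (V ⊕ F.edgeSet) :=
  SimpleGraph.fromRel (fun a b =>
    (∃ u v, a = Sum.inl u ∧ b = Sum.inl v ∧ F.Adj u v) ∨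
    (∃ u, ∃ e : F.edgeSet, a = Sum.inl u ∧ b = Sum.inr e ∧ u ∈ (e : Sym2 V)))

/-- `C₄^△`, the expansion of the 4-edge cycle: a graph on 8 vertices. -/
def C4expansion : SimpleGraph ((Fin 4) ⊕ (SimpleGraph.cycleGraph 4).edgeSet) :=
  expansion (SimpleGraph.cycleGraph 4)

/-- The generalized Turán number `ex(n, K₃, H)`: the maximum number of triangles in an
`H`-free graph on `n` vertices. -/
noncomputable def exTriangles (n : ℕ) {W : Type*} (H : SimpleGraph W) : ℕ :=
  sSup {k | ∃ G : SimpleGraph (Fin n), _root_.Free H G ∧ triangleCount G = k}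

/-- `T(n)`: the complete bipartite graph on `Fin n` with parts
`X = {v : v < ⌊n/2⌋}` (of size `⌊n/2⌋`) and `Y = {v : v ≥ ⌊n/2⌋}` (of size `⌈n/2⌉`). -/
def Tgraph (n : ℕ) : SimpleGraph (Fin n) :=
  SimpleGraph.fromRel (fun u v => u.val < n / 2 ∧ n / 2 ≤ v.val)

/-- `T⁺(n)`: the graph `T(n)` with one extra edge (between vertices `0` and `1`) added
inside the part `X`. -/
def TgraphPlus (n : ℕ) : SimpleGraph (Fin n) :=
  SimpleGraph.fromRel (fun u v =>
    (u.val < n / 2 ∧ n / 2 ≤ v.val) ∨ (u.val = 0 ∧ v.val = 1))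

/-- `T⁼(n)`: the graph obtained from `T(n)` by adding the edge `e₁ = {0,1}` inside `X`,
adding the edge `e₂ = {⌊n/2⌋, ⌊n/2⌋+1}` inside `Y`, and deleting the perfect matching
`{0,⌊n/2⌋}, {1,⌊n/2⌋+1}` between the endpoints of `e₁` and of `e₂`. -/
def TgraphEq (n : ℕ) : SimpleGraph (Fin n) :=
  SimpleGraph.fromRel (fun u v =>
    (u.val < n / 2 ∧ n / 2 ≤ v.val ∧
      ¬(u.val = 0 ∧ v.val = n / 2) ∧ ¬(u.val = 1 ∧ v.val = n / 2 + 1))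
    ∨ (u.val = 0 ∧ v.val = 1) ∨ (u.val = n / 2 ∧ v.val = n / 2 + 1))

/-- The join `K₁ ⋈ H` of a single new vertex with the graph `H`. -/
def joinK1 {V : Type*} (H : SimpleGraph V) : SimpleGraph (Option V) :=
  SimpleGraph.fromRel (fun u v =>
    u = none ∨ ∃ a b, u = some a ∧ v = some b ∧ H.Adj a b)

/-- `S(n) = K₁ ⋈ T(n-1)`. -/
def Sgraph (n : ℕ) : SimpleGraph (Option (Fin (n - 1))) := joinK1 (Tgraph (n - 1))

/-- `S⁺(n) = K₁ ⋈ T⁺(n-1)`. -/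
def SgraphPlus (n : ℕ) : SimpleGraph (Option (Fin (n - 1))) := joinK1 (TgraphPlus (n - 1))

/-- `S⁼(n) = K₁ ⋈ T⁼(n-1)`. -/
def SgraphEq (n : ℕ) : SimpleGraph (Option (Fin (n - 1))) := joinK1 (TgraphEq (n - 1))

/-- `d_G(uv)`: the number of triangles of `G` containing the edge `uv`, i.e. the number of
common neighbors of `u` and `v`. -/
noncomputable def edgeTriangleDeg {V : Type*} (G : SimpleGraph V) (u v : V) : ℕ :=
  {w : V | G.Adj u w ∧ G.Adj v w}.ncard

/-- `e_G(A, B)`: the number of edges of `G` with one endpoint in `A` and the other in `B`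
(for disjoint `A`, `B`). -/
noncomputable def crossEdges {V : Type*} (G : SimpleGraph V) (A B : Set V) : ℕ :=
  {p : V × V | p.1 ∈ A ∧ p.2 ∈ B ∧ G.Adj p.1 p.2}.ncard

/-!
Every vertex of `D₁'` lies in at least `n/200 ≥ 8` triangles with `x`, and any four vertices of
`D₁'` have many common neighbours: each has `2n/5` neighbours in `V₂`, while the max-cut bound
forces `|V₂| ≤ 13n/25`. Two edges inside `D₁'` then close a copy of `C₄^△`. If they share a vertex,
say `ab` and `bc`, use the 4-cycle `a x c b` with two common neighbours of `a, b, c` (other than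
`x`) as tips on `cb` and `ba`. If they are disjoint, say `ab` and `cd`, use the 4-cycle `a x c y`
for a common neighbour `y ≠ x` of `a, b, c, d`, with tips `d` on `cy` and `b` on `ya`. The tips on
the two edges at `x` are then chosen greedily among the at least 8 common neighbours of their ends.
-/

lemma Set.exists_mem_notMem_of_length_lt {α : Type*} {S : Set α} (L : List α)
    (h : L.length < S.ncard) : ∃ y ∈ S, y ∉ L := by
  classical
  obtain ⟨y, hyS, hyL⟩ :=
    Set.exists_mem_notMem_of_ncard_lt_ncard (s := (L.toFinset : Set α)) (t := S)
      (by rw [Set.ncard_coe_finset]; exact (List.toFinset_card_le L).trans_lt h)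
  exact ⟨y, hyS, by simpa using hyL⟩

lemma Set.ncard_add_ncard_le_ncard_inter_add {α : Type*} {A B W : Set α} (hW : W.Finite)
    (hA : A ⊆ W) (hB : B ⊆ W) : A.ncard + B.ncard ≤ (A ∩ B).ncard + W.ncard := by
  rw [← Set.ncard_inter_add_ncard_union A B (hW.subset hA) (hW.subset hB)]
  exact Nat.add_le_add_left (Set.ncard_le_ncard (Set.union_subset hA hB) hW) _

lemma cycleGraph_four_adj {u v : Fin 4} (h : (cycleGraph 4).Adj u v) : v = u + 1 ∨ u = v + 1 := by
  rw [cycleGraph_adj] at h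
  rcases h with h | h
  · exact Or.inr (by rw [← h]; abel)
  · exact Or.inl (by rw [← h]; abel)

lemma cycleGraph_four_edge {e : Sym2 (Fin 4)} (he : e ∈ (cycleGraph 4).edgeSet) :
    ∃ i, e = s(i, i + 1) := by
  induction e using Sym2.ind with
  | _ u v =>
    rcases cycleGraph_four_adj ((cycleGraph 4).mem_edgeSet.1 he) with rfl | rfl
    · exact ⟨u, rfl⟩
    · exact ⟨v, Sym2.eq_swap⟩

/-- `q i` is the tip of the triangle on the cycle edge `p i, p (i + 1)`. -/
theorem contains_C4expansion {V : Type*} {G : SimpleGraph V} (p q : Fin 4 → V)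
    (hp : ∀ i, G.Adj (p i) (p (i + 1)))
    (hq : ∀ i, G.Adj (p i) (q i) ∧ G.Adj (p (i + 1)) (q i))
    (hnodup : (List.ofFn q ++ List.ofFn p).Nodup) : Contains C4expansion G := by
  obtain ⟨hqinj, hpinj, hpq⟩ := List.nodup_append.1 hnodup
  choose idx hidx using fun e : (cycleGraph 4).edgeSet => cycleGraph_four_edge e.2
  have hidx_inj : Function.Injective idx := fun e e' h =>
    Subtype.ext (by rw [hidx e, hidx e', h])
  have hadj : ∀ u v, (cycleGraph 4).Adj u v → G.Adj (p u) (p v) := by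
    intro u v huv
    rcases cycleGraph_four_adj huv with rfl | rfl
    · exact hp u
    · exact (hp v).symm
  have htip : ∀ (e : (cycleGraph 4).edgeSet) u, u ∈ (e : Sym2 (Fin 4)) →
      G.Adj (p u) (q (idx e)) := by
    intro e u hu
    rw [hidx e, Sym2.mem_iff] at hu
    rcases hu with rfl | rfl
    exacts [(hq _).1, (hq _).2]
  refine ⟨⟨Sum.elim p (q ∘ idx), ?_⟩, ?_⟩
  · rintro a b ⟨-, (⟨u, v, rfl, rfl, huv⟩ | ⟨u, e, rfl, rfl, hu⟩) |
      (⟨u, v, rfl, rfl, huv⟩ | ⟨u, e, rfl, rfl, hu⟩)⟩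
    exacts [hadj u v huv, htip e u hu, (hadj u v huv).symm, (htip e u hu).symm]
  · refine Function.Injective.sumElim (List.nodup_ofFn.1 hpinj)
      ((List.nodup_ofFn.1 hqinj).comp hidx_inj) fun u e h => ?_
    exact hpq _ (List.mem_ofFn.2 ⟨_, rfl⟩) _ (List.mem_ofFn.2 ⟨u, rfl⟩) h.symm

lemma edgeTriangleDeg_comm {V : Type*} (G : SimpleGraph V) (u v : V) :
    edgeTriangleDeg G u v = edgeTriangleDeg G v u := by
  simp only [edgeTriangleDeg, and_comm]

theorem contains_C4expansion_of_edgeTriangleDeg {V : Type*} {G : SimpleGraph V}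
    {p₀ p₁ p₂ p₃ q₂ q₃ : V} (h01 : G.Adj p₀ p₁) (h12 : G.Adj p₁ p₂) (h23 : G.Adj p₂ p₃)
    (h30 : G.Adj p₃ p₀) (hq₂ : G.Adj p₂ q₂ ∧ G.Adj p₃ q₂) (hq₃ : G.Adj p₃ q₃ ∧ G.Adj p₀ q₃)
    (hd₀ : 8 ≤ edgeTriangleDeg G p₀ p₁) (hd₁ : 8 ≤ edgeTriangleDeg G p₁ p₂)
    (hnodup : [q₂, q₃, p₀, p₁, p₂, p₃].Nodup) : Contains C4expansion G := by
  obtain ⟨q₁, hq₁, hq₁_fresh⟩ := Set.exists_mem_notMem_of_length_lt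
    [q₂, q₃, p₀, p₁, p₂, p₃] (Nat.lt_of_succ_lt hd₁)
  obtain ⟨q₀, hq₀, hq₀_fresh⟩ := Set.exists_mem_notMem_of_length_lt
    [q₁, q₂, q₃, p₀, p₁, p₂, p₃] hd₀
  refine contains_C4expansion ![p₀, p₁, p₂, p₃] ![q₀, q₁, q₂, q₃] ?_ ?_
    (List.nodup_cons.2 ⟨hq₀_fresh, List.nodup_cons.2 ⟨hq₁_fresh, hnodup⟩⟩)
  · intro i; fin_cases i
    exacts [h01, h12, h23, h30]
  · intro i; fin_cases i
    exacts [hq₀, hq₁, hq₂, hq₃]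

section

variable {V : Type*} {G : SimpleGraph V} {x : V} {D : Set V}
  (hfree : _root_.Free C4expansion G) (hD : ∀ v ∈ D, G.Adj v x ∧ 8 ≤ edgeTriangleDeg G v x)
  (hcommon : ∀ a ∈ D, ∀ b ∈ D, ∀ c ∈ D, ∀ d ∈ D,
    2 < (G.neighborSet a ∩ G.neighborSet b ∩ G.neighborSet c ∩ G.neighborSet d).ncard)
include hfree hD hcommon

lemma not_adj_adj_of_ne {a b c : V} (ha : a ∈ D) (hb : b ∈ D) (hc : c ∈ D) (hac : a ≠ c) :
    ¬ (G.Adj a b ∧ G.Adj b c) := by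
  rintro ⟨hab, hbc⟩
  obtain ⟨hax, hdax⟩ := hD a ha
  obtain ⟨hcx, hdcx⟩ := hD c hc
  have hbx := (hD b hb).1
  obtain ⟨y₁, ⟨⟨⟨hay₁, hby₁⟩, hcy₁⟩, -⟩, hy₁⟩ :=
    Set.exists_mem_notMem_of_length_lt [x] (Nat.lt_of_succ_lt (hcommon a ha b hb c hc c hc))
  obtain ⟨y₂, ⟨⟨⟨hay₂, hby₂⟩, hcy₂⟩, -⟩, hy₂⟩ :=
    Set.exists_mem_notMem_of_length_lt [x, y₁] (hcommon a ha b hb c hc c hc)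
  refine hfree (contains_C4expansion_of_edgeTriangleDeg hax hcx.symm hbc.symm hab.symm
    ⟨hcy₂, hby₂⟩ ⟨hby₁, hay₁⟩ hdax (edgeTriangleDeg_comm G x c ▸ hdcx) ?_)
  simp only [List.nodup_cons, List.mem_cons, List.not_mem_nil] at hy₁ hy₂ ⊢
  grind [SimpleGraph.Adj.ne, mem_neighborSet]

lemma not_adj_adj_of_disjoint {a b c d : V} (ha : a ∈ D) (hb : b ∈ D) (hc : c ∈ D) (hd : d ∈ D)
    (hac : a ≠ c) (had : a ≠ d) (hbc : b ≠ c) (hbd : b ≠ d) : ¬ (G.Adj a b ∧ G.Adj c d) := by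
  rintro ⟨hab, hcd⟩
  obtain ⟨hax, hdax⟩ := hD a ha
  obtain ⟨hcx, hdcx⟩ := hD c hc
  have hbx := (hD b hb).1
  have hdx := (hD d hd).1
  obtain ⟨y, ⟨⟨⟨hay, hby⟩, hcy⟩, hdy⟩, hy⟩ :=
    Set.exists_mem_notMem_of_length_lt [x] (Nat.lt_of_succ_lt (hcommon a ha b hb c hc d hd))
  refine hfree (contains_C4expansion_of_edgeTriangleDeg hax hcx.symm hcy hay.symm
    ⟨hcd, hdy.symm⟩ ⟨hby.symm, hab⟩ hdax (edgeTriangleDeg_comm G x c ▸ hdcx) ?_)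
  simp only [List.nodup_cons, List.mem_cons, List.not_mem_nil] at hy ⊢
  grind [SimpleGraph.Adj.ne, mem_neighborSet]

theorem ncard_edges_within_le_one : {e : Sym2 V | e ∈ G.edgeSet ∧ ∀ v ∈ e, v ∈ D}.ncard ≤ 1 := by
  suffices h : {e : Sym2 V | e ∈ G.edgeSet ∧ ∀ v ∈ e, v ∈ D}.Subsingleton from
    (Set.ncard_le_one h.finite).2 h
  rintro e ⟨he, heD⟩ f ⟨hf, hfD⟩
  induction e using Sym2.ind with | _ a b => ?_
  induction f using Sym2.ind with | _ c d => ?_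
  have ha := heD a (Sym2.mem_mk_left a b)
  have hb := heD b (Sym2.mem_mk_right a b)
  have hc := hfD c (Sym2.mem_mk_left c d)
  have hd := hfD d (Sym2.mem_mk_right c d)
  rw [mem_edgeSet] at he hf
  by_contra hne
  by_cases hac : a = c
  · subst hac
    exact not_adj_adj_of_ne hfree hD hcommon hb ha hd (fun h => hne (by rw [h])) ⟨he.symm, hf⟩
  by_cases had : a = d
  · subst had
    exact not_adj_adj_of_ne hfree hD hcommon hb ha hc (fun h => hne (by rw [h, Sym2.eq_swap]))
      ⟨he.symm, hf.symm⟩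
  by_cases hbc : b = c
  · subst hbc
    exact not_adj_adj_of_ne hfree hD hcommon ha hb hd had ⟨he, hf⟩
  by_cases hbd : b = d
  · subst hbd
    exact not_adj_adj_of_ne hfree hD hcommon ha hb hc hac ⟨he, hf.symm⟩
  exact not_adj_adj_of_disjoint hfree hD hcommon ha hb hc hd hac had hbc hbd ⟨he, hf⟩

end

lemma ncard_neighborSet_inter_add_le {V : Type*} [Finite V] (G : SimpleGraph V) (W : Set V)
    (a b c d : V) :
    (G.neighborSet a ∩ W).ncard + (G.neighborSet b ∩ W).ncard + (G.neighborSet c ∩ W).ncard +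
        (G.neighborSet d ∩ W).ncard ≤
      (G.neighborSet a ∩ G.neighborSet b ∩ G.neighborSet c ∩ G.neighborSet d).ncard +
        3 * W.ncard := by
  set A := G.neighborSet a ∩ W
  set B := G.neighborSet b ∩ W
  set C := G.neighborSet c ∩ W
  set E := G.neighborSet d ∩ W
  have hW := W.toFinite
  have hA : A ⊆ W := Set.inter_subset_right
  have hB : B ⊆ W := Set.inter_subset_right
  have hC : C ⊆ W := Set.inter_subset_right
  have hE : E ⊆ W := Set.inter_subset_right
  have hAB := Set.ncard_add_ncard_le_ncard_inter_add hW hA hB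
  have hCE := Set.ncard_add_ncard_le_ncard_inter_add hW hC hE
  have hABCE := Set.ncard_add_ncard_le_ncard_inter_add hW
    (Set.inter_subset_left.trans hA : A ∩ B ⊆ W) (Set.inter_subset_left.trans hC : C ∩ E ⊆ W)
  have hsub : (A ∩ B ∩ (C ∩ E)).ncard ≤
      (G.neighborSet a ∩ G.neighborSet b ∩ G.neighborSet c ∩ G.neighborSet d).ncard :=
    Set.ncard_le_ncard fun y hy => ⟨⟨⟨hy.1.1.1, hy.1.2.1⟩, hy.2.1.1⟩, hy.2.2.1⟩
  omega

theorem ncard_edges_within_le_one_of_many_neighbors {V : Type*} [Finite V] {G : SimpleGraph V}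
    (hfree : _root_.Free C4expansion G) {x : V} {W D : Set V} {n : ℝ} (hn : 1600 ≤ n)
    (hW : (W.ncard : ℝ) ≤ 13 * n / 25)
    (hD : ∀ v ∈ D, G.Adj v x ∧ n / 200 ≤ (edgeTriangleDeg G v x : ℝ) ∧
      2 * n / 5 ≤ ((G.neighborSet v ∩ W).ncard : ℝ)) :
    {e : Sym2 V | e ∈ G.edgeSet ∧ ∀ v ∈ e, v ∈ D}.ncard ≤ 1 := by
  refine ncard_edges_within_le_one hfree (fun v hv => ⟨(hD v hv).1, ?_⟩)
    fun a ha b hb c hc d hd => ?_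
  · have : (8 : ℝ) ≤ edgeTriangleDeg G v x := by linarith [(hD v hv).2.1]
    exact_mod_cast this
  · have : (2 : ℝ) < (G.neighborSet a ∩ G.neighborSet b ∩ G.neighborSet c ∩
        G.neighborSet d).ncard := by
      have h : ((G.neighborSet a ∩ W).ncard : ℝ) + (G.neighborSet b ∩ W).ncard +
          (G.neighborSet c ∩ W).ncard + (G.neighborSet d ∩ W).ncard ≤
          (G.neighborSet a ∩ G.neighborSet b ∩ G.neighborSet c ∩ G.neighborSet d).ncard +
            3 * W.ncard := by exact_mod_cast ncard_neighborSet_inter_add_le G W a b c d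
      linarith [(hD a ha).2.2, (hD b hb).2.2, (hD c hc).2.2, (hD d hd).2.2]
    exact_mod_cast this

lemma crossEdges_le_ncard_mul_ncard {V : Type*} [Finite V] (G : SimpleGraph V) (A B : Set V) :
    crossEdges G A B ≤ A.ncard * B.ncard :=
  Set.ncard_prod (s := A) (t := B) ▸ Set.ncard_le_ncard fun _ hp => ⟨hp.1, hp.2.1⟩

lemma ncard_le_of_crossEdges_ge {n : ℕ} (G : SimpleGraph (Fin n)) {V1 V2 : Set (Fin n)}
    (hdisj : Disjoint V1 V2) {δ : ℝ} (hδ : δ ≤ 1 / 5000)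
    (hcross : (n : ℝ) ^ 2 / 4 - 2 * δ * (n : ℝ) ^ 2 ≤ (crossEdges G V1 V2 : ℝ)) :
    (V1.ncard : ℝ) ≤ 13 * n / 25 ∧ (V2.ncard : ℝ) ≤ 13 * n / 25 := by
  have hsum : (V1.ncard : ℝ) + V2.ncard ≤ n := by
    have h := Set.ncard_union_eq hdisj ▸ Set.ncard_le_card (V1 ∪ V2)
    rw [Nat.card_fin] at h
    exact_mod_cast h
  have hprod : (n : ℝ) ^ 2 / 4 - (n : ℝ) ^ 2 / 2500 ≤ V1.ncard * V2.ncard := by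
    have h : (crossEdges G V1 V2 : ℝ) ≤ V1.ncard * V2.ncard := by
      exact_mod_cast crossEdges_le_ncard_mul_ncard G V1 V2
    nlinarith [sq_nonneg (n : ℝ)]
  have h1 : (0 : ℝ) ≤ V1.ncard := by positivity
  have h2 : (0 : ℝ) ≤ V2.ncard := by positivity
  constructor <;> nlinarith [sq_nonneg ((V1.ncard : ℝ) - V2.ncard)]

/-- There exist `δ₀ > 0` and `n₀` such that for all `0 < δ ≤ δ₀` and `n ≥ n₀`,
under the Setup, `G` has at most one edge inside `D₁'` and at most one edge inside `D₂'`. -/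
theorem stmt18 : ∃ δ0 : ℝ, 0 < δ0 ∧ ∃ n0 : ℕ,
    ∀ δ : ℝ, 0 < δ → δ ≤ δ0 → ∀ n : ℕ, n0 ≤ n →
    ∀ G : SimpleGraph (Fin n), _root_.Free C4expansion G →
    (∀ u v : Fin n, G.Adj u v → ∃ w : Fin n, G.Adj u w ∧ G.Adj v w) →
    ∀ (x : Fin n) (V1 V2 : Set (Fin n)),
    Disjoint V1 V2 → V1 ∪ V2 = {x}ᶜ →
    (∀ W1 W2 : Set (Fin n), Disjoint W1 W2 → W1 ∪ W2 = {x}ᶜ →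
      crossEdges G W1 W2 ≤ crossEdges G V1 V2) →
    ((n : ℝ) ^ 2 / 4 - 2 * δ * (n : ℝ) ^ 2 ≤ (crossEdges G V1 V2 : ℝ)) →
    ∀ D : Set (Fin n),
    D = {v : Fin n | v ≠ x ∧ G.Adj v x ∧
      (n : ℝ) / 200 ≤ (edgeTriangleDeg G v x : ℝ)} →
    ∀ D1 D2 : Set (Fin n), D1 = D ∩ V1 → D2 = D ∩ V2 →
    ∀ D1' D2' : Set (Fin n),
    D1' = {v ∈ D1 | 2 * (n : ℝ) / 5 ≤ ((G.neighborSet v ∩ V2).ncard : ℝ)} →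
    D2' = {v ∈ D2 | 2 * (n : ℝ) / 5 ≤ ((G.neighborSet v ∩ V1).ncard : ℝ)} →
    ({e : Sym2 (Fin n) | e ∈ G.edgeSet ∧ ∀ v ∈ e, v ∈ D1'}.ncard ≤ 1 ∧
      {e : Sym2 (Fin n) | e ∈ G.edgeSet ∧ ∀ v ∈ e, v ∈ D2'}.ncard ≤ 1) := by
  refine ⟨1 / 5000, by norm_num, 1600, ?_⟩
  rintro δ - hδ n hn G hfree - x V1 V2 hdisj - - hcross D rfl D1 D2 rfl rfl D1' D2' rfl rfl
  obtain ⟨hV1, hV2⟩ := ncard_le_of_crossEdges_ge G hdisj hδ hcross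
  have hn' : (1600 : ℝ) ≤ n := by exact_mod_cast hn
  exact ⟨ncard_edges_within_le_one_of_many_neighbors hfree hn' hV2
      fun v ⟨⟨⟨_, hvx, hvT⟩, _⟩, hvN⟩ => ⟨hvx, hvT, hvN⟩,
    ncard_edges_within_le_one_of_many_neighbors hfree hn' hV1
      fun v ⟨⟨⟨_, hvx, hvT⟩, _⟩, hvN⟩ => ⟨hvx, hvT, hvN⟩⟩
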